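/- Let g be an atomic clock constraint on clock w with constant d, let Z be a time-elapsed set of valuations, and let L', U' and L_new, U_new be LU-bound functions with L'(x) ≤ L_new(x) and U'(x) ≤ U_new(x) for every clock x. Assume moreover that d ≤ L_new(w) if g is a lower-bound constraint (w > d or w ≥ d), that d ≤ U_new(w) if g is an upper-bound constraint (w < d or w ≤ d), and both if g is w = d. Then Post_{g,∅}(a_{L_newU_new}(Z)) ⊆ a_{L'U'}(Post_{g,∅}(Z)). -/

import Mathlib

/-! Common framework: clocks, valuations, guards, zones, timed automata,
LU-bounds and LU-abstraction, following the paper's definitions. -/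

abbrev Val (X : Type*) := X → NNReal

/-- Time delay: `v + δ`. -/
def delay {X : Type*} (v : Val X) (δ : NNReal) : Val X := fun x => v x + δ

open Classical in
/-- Reset `[R]v`. -/
noncomputable def resetV {X : Type*} (R : Set X) (v : Val X) : Val X :=
  fun x => if x ∈ R then 0 else v x

/-- The valuation `0̄`. -/
def zeroVal (X : Type*) : Val X := fun _ => 0

/-- Comparison operators for atomic clock constraints. -/
inductive Cmp where
  | lt | le | eq | ge | gt

/-- Satisfaction of `a # c`. -/
def Cmp.sat : Cmp → NNReal → ℕ → Prop
  | .lt, a, c => a < (c : NNReal)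
  | .le, a, c => a ≤ (c : NNReal)
  | .eq, a, c => a = (c : NNReal)
  | .ge, a, c => (c : NNReal) ≤ a
  | .gt, a, c => (c : NNReal) < a

/-- An atomic clock constraint `x # c`. -/
structure Atomic (X : Type*) where
  clock : X
  cmp : Cmp
  bound : ℕ

/-- A guard is a finite conjunction of atomic constraints. -/
abbrev Guard (X : Type*) := List (Atomic X)

/-- `v ⊨ g`. -/
def satG {X : Type*} (v : Val X) (g : Guard X) : Prop :=
  ∀ a ∈ g, a.cmp.sat (v a.clock) a.bound

/-- Lower-bound constraints: `x > c` or `x ≥ c`. -/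
def Atomic.isLower {X : Type*} (a : Atomic X) : Prop := a.cmp = Cmp.gt ∨ a.cmp = Cmp.ge

/-- Upper-bound constraints: `x < c` or `x ≤ c`. -/
def Atomic.isUpper {X : Type*} (a : Atomic X) : Prop := a.cmp = Cmp.lt ∨ a.cmp = Cmp.le

/-- A set `W` of valuations is time-elapsed. -/
def TimeElapsed {X : Type*} (W : Set (Val X)) : Prop :=
  ∀ v ∈ W, ∀ δ : NNReal, delay v δ ∈ W

/-- `Post_{g,R}(W) = { [R]v + δ | v ∈ W, v ⊨ g, δ ∈ ℝ≥0 }`. -/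
def post {X : Type*} (g : Guard X) (R : Set X) (W : Set (Val X)) : Set (Val X) :=
  { w | ∃ v ∈ W, satG v g ∧ ∃ δ : NNReal, w = delay (resetV R v) δ }

/-- LU-bounds take values in `ℕ ∪ {−∞}`. -/
abbrev Bnd := WithBot ℕ

/-- `b < r` where `b ∈ ℕ ∪ {−∞}` and `r ∈ ℝ≥0` (every real is greater than `−∞`). -/
def Bnd.ltVal (b : Bnd) (r : NNReal) : Prop :=
  ∀ n : ℕ, b = (n : Bnd) → (n : NNReal) < r

/-- The LU-preorder `v ⊑_LU v'`. -/
def luLe {X : Type*} (L U : X → Bnd) (v v' : Val X) : Prop :=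
  ∀ x, (v' x < v x → Bnd.ltVal (L x) (v' x)) ∧ (v x < v' x → Bnd.ltVal (U x) (v x))

/-- `a_LU(W)`. -/
def aLU {X : Type*} (L U : X → Bnd) (W : Set (Val X)) : Set (Val X) :=
  { v | ∃ v' ∈ W, luLe L U v v' }

/-- A timed automaton `(Q, q0, X, T, Acc)` (finiteness of `Q`, `X`, `trans`
is imposed as hypotheses of the theorems). -/
structure TA (Q X : Type*) where
  q0 : Q
  trans : Set (Q × Guard X × Set X × Q)
  acc : Set Q

/-- One delay or action transition between configurations. -/
def step {Q X : Type*} (A : TA Q X) (c c' : Q × Val X) : Prop :=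
  (c'.1 = c.1 ∧ ∃ δ : NNReal, c'.2 = delay c.2 δ) ∨
  (∃ g R, (c.1, g, R, c'.1) ∈ A.trans ∧ satG c.2 g ∧ c'.2 = resetV R c.2)

/-- There is a run (finite alternating sequence of delay and action transitions)
from `c` to `c'`. -/
def Reach {Q X : Type*} (A : TA Q X) : (Q × Val X) → (Q × Val X) → Prop :=
  Relation.ReflTransGen (step A)

/-- Symbolic transition `(q,W) ⇒^t (q', Post_t(W))`, union over all `t ∈ T`. -/
def symbStep {Q X : Type*} (A : TA Q X) (p p' : Q × Set (Val X)) : Prop :=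
  ∃ g R, (p.1, g, R, p'.1) ∈ A.trans ∧ p'.2 = post g R p.2

/-- The initial zone `Z0 = { 0̄ + δ | δ ∈ ℝ≥0 }`. -/
def Z0 (X : Type*) : Set (Val X) := { v | ∃ δ : NNReal, v = delay (zeroVal X) δ }

/-- Time-abstract simulation for `A`. -/
def IsTASim {Q X : Type*} (A : TA Q X) (S : (Q × Val X) → (Q × Val X) → Prop) : Prop :=
  (∀ c c', S c c' → c.1 = c'.1) ∧
  (∀ (q : Q) (v v' : Val X) (δ : NNReal) (g : Guard X) (R : Set X) (q1 : Q),
    S (q, v) (q, v') → (q, g, R, q1) ∈ A.trans → satG (delay v δ) g →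
    ∃ δ' : NNReal, satG (delay v' δ') g ∧
      S (q1, resetV R (delay v δ)) (q1, resetV R (delay v' δ')))

/-- Abstraction induced by a preorder `≼` on valuations. -/
def aAbs {X : Type*} (pre : Val X → Val X → Prop) (W : Set (Val X)) : Set (Val X) :=
  { v | ∃ v' ∈ W, pre v v' }

/-- Abstract transition `(q,W) ⇒_a (q', a(W'))` whenever `W = a(W)` and `(q,W) ⇒ (q',W')`. -/
def absStep {Q X : Type*} (A : TA Q X) (pre : Val X → Val X → Prop)
    (p p' : Q × Set (Val X)) : Prop :=
  p.2 = aAbs pre p.2 ∧ ∃ W', symbStep A p (p'.1, W') ∧ p'.2 = aAbs pre W'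


/-! If `v ⊑_{Lnew Unew} v'` and `v ⊨ w # d`, then `v'` can only leave the guard by moving `w`
to the constrained side, which `⊑` allows only beyond the bound `Lnew w` or `Unew w`, hence
beyond `d`; so `v' ⊨ w # d` as well. The relation `v + δ ⊑ v' + δ` survives the common delay,
and shrinking the bounds to `L' ≤ Lnew`, `U' ≤ Unew` only makes `⊑` coarser. -/

namespace Bnd.ltVal

lemma of_le {b b' : Bnd} {r : NNReal} (hb : b ≤ b') (h : Bnd.ltVal b' r) :
    Bnd.ltVal b r := by
  rintro n rfl
  obtain ⟨m, rfl, hnm⟩ := WithBot.coe_le_iff.mp hb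
  exact lt_of_le_of_lt (by exact_mod_cast hnm) (h m rfl)

lemma mono {b : Bnd} {r s : NNReal} (h : Bnd.ltVal b r) (hrs : r ≤ s) : Bnd.ltVal b s :=
  fun n hn => (h n hn).trans_le hrs

lemma natCast_lt {b : Bnd} {d : ℕ} {r : NNReal} (hd : (d : Bnd) ≤ b) (h : Bnd.ltVal b r) :
    (d : NNReal) < r :=
  h.of_le hd d rfl

end Bnd.ltVal

lemma resetV_empty {X : Type*} (v : Val X) : resetV (∅ : Set X) v = v := by
  funext x
  simp [resetV]

namespace luLe

variable {X : Type*} {L U : X → Bnd} {v v' : Val X}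

lemma mono_bounds {L' U' : X → Bnd} (hL : ∀ x, L' x ≤ L x) (hU : ∀ x, U' x ≤ U x)
    (h : luLe L U v v') : luLe L' U' v v' := fun x =>
  ⟨fun hlt => ((h x).1 hlt).of_le (hL x), fun hlt => ((h x).2 hlt).of_le (hU x)⟩

lemma delay (h : luLe L U v v') (δ : NNReal) : luLe L U (delay v δ) (delay v' δ) := fun x =>
  ⟨fun hlt => ((h x).1 (lt_of_add_lt_add_right hlt)).mono le_self_add,
    fun hlt => ((h x).2 (lt_of_add_lt_add_right hlt)).mono le_self_add⟩

lemma natCast_lt_of_lt {x : X} {d : ℕ} (h : luLe L U v v') (hd : (d : Bnd) ≤ L x)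
    (hlt : v' x < v x) : (d : NNReal) < v' x :=
  Bnd.ltVal.natCast_lt hd ((h x).1 hlt)

lemma natCast_lt_of_gt {x : X} {d : ℕ} (h : luLe L U v v') (hd : (d : Bnd) ≤ U x)
    (hlt : v x < v' x) : (d : NNReal) < v x :=
  Bnd.ltVal.natCast_lt hd ((h x).2 hlt)

lemma satG_atomic {w : X} {c : Cmp} {d : ℕ} (h : luLe L U v v')
    (hlow : c = Cmp.gt ∨ c = Cmp.ge → (d : Bnd) ≤ L w)
    (hup : c = Cmp.lt ∨ c = Cmp.le → (d : Bnd) ≤ U w)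
    (heq : c = Cmp.eq → (d : Bnd) ≤ L w ∧ (d : Bnd) ≤ U w)
    (hv : satG v [⟨w, c, d⟩]) : satG v' [⟨w, c, d⟩] := by
  have hvw : c.sat (v w) d := hv _ (List.mem_singleton_self _)
  simp only [satG, List.mem_singleton, forall_eq]
  cases c <;> simp only [Cmp.sat] at hvw ⊢
  case lt =>
    by_contra! hge
    exact (h.natCast_lt_of_gt (hup (.inl rfl)) (hvw.trans_le hge)).not_gt hvw
  case le =>
    by_contra! hgt
    exact (h.natCast_lt_of_gt (hup (.inr rfl)) (hvw.trans_lt hgt)).not_ge hvw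
  case eq =>
    rcases lt_trichotomy (v' w) (v w) with hlt | hweq | hgt
    · exact absurd hvw ((h.natCast_lt_of_lt (heq rfl).1 hlt).trans hlt).ne'
    · exact hweq.trans hvw
    · exact absurd hvw (h.natCast_lt_of_gt (heq rfl).2 hgt).ne'
  case ge =>
    rcases le_or_gt (v w) (v' w) with hle | hlt
    · exact hvw.trans hle
    · exact (h.natCast_lt_of_lt (hlow (.inr rfl)) hlt).le
  case gt =>
    rcases le_or_gt (v w) (v' w) with hle | hlt
    · exact hvw.trans_le hle
    · exact h.natCast_lt_of_lt (hlow (.inl rfl)) hlt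

end luLe

theorem stmt_9_general {X : Type*} (w : X) (c : Cmp) (d : ℕ)
    (Z : Set (Val X))
    (L' U' Lnew Unew : X → Bnd)
    (hL : ∀ x, L' x ≤ Lnew x) (hU : ∀ x, U' x ≤ Unew x)
    (hlow : c = Cmp.gt ∨ c = Cmp.ge → (d : Bnd) ≤ Lnew w)
    (hup : c = Cmp.lt ∨ c = Cmp.le → (d : Bnd) ≤ Unew w)
    (heq : c = Cmp.eq → (d : Bnd) ≤ Lnew w ∧ (d : Bnd) ≤ Unew w) :
    post [⟨w, c, d⟩] (∅ : Set X) (aLU Lnew Unew Z) ⊆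
      aLU L' U' (post [⟨w, c, d⟩] (∅ : Set X) Z) := by
  rintro _ ⟨v, ⟨v', hv'Z, hvv'⟩, hv, δ, rfl⟩
  refine ⟨delay v' δ, ⟨v', hv'Z, hvv'.satG_atomic hlow hup heq hv, δ, by rw [resetV_empty]⟩, ?_⟩
  rw [resetV_empty]
  exact (hvv'.delay δ).mono_bounds hL hU

/-- taking an atomic guard into the propagated bounds maintains
Invariant I2 for guard transitions. -/
theorem stmt_9 {X : Type*} [Finite X] (w : X) (c : Cmp) (d : ℕ)
    (Z : Set (Val X)) (hZ : TimeElapsed Z)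
    (L' U' Lnew Unew : X → Bnd)
    (hL : ∀ x, L' x ≤ Lnew x) (hU : ∀ x, U' x ≤ Unew x)
    (hlow : c = Cmp.gt ∨ c = Cmp.ge → (d : Bnd) ≤ Lnew w)
    (hup : c = Cmp.lt ∨ c = Cmp.le → (d : Bnd) ≤ Unew w)
    (heq : c = Cmp.eq → (d : Bnd) ≤ Lnew w ∧ (d : Bnd) ≤ Unew w) :
    post [⟨w, c, d⟩] (∅ : Set X) (aLU Lnew Unew Z) ⊆
      aLU L' U' (post [⟨w, c, d⟩] (∅ : Set X) Z) :=
  stmt_9_general w c d Z L' U' Lnew Unew hL hU hlow hup heq
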